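/- arXiv:1503.04124 — 6 statements merged into one kernel-verified Lean document; each statement's English description precedes it below -/
import Mathlib

section
/- A tournament T is locally transitive if and only if T contains no subtournament isomorphic to W_4 and no subtournament isomorphic to L_4, where W_4 is the unique tournament on 4 vertices with outdegree sequence (1,1,1,3) and L_4 is the unique tournament on 4 vertices with outdegree sequence (0,2,2,2). -/
/-- A tournament is locally transitive iff it contains no copy of `W₄`
(a vertex beating a 3-cycle) and no copy of `L₄` (a vertex beaten by a 3-cycle). -/
theorem stmt_3 {V : Type*} (r : V → V → Prop)
    (hirr : ∀ x, ¬ r x x)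
    (htour : ∀ x y : V, x ≠ y → Xor' (r x y) (r y x)) :
    ((∀ v a b c : V, r v a → r v b → r v c → r a b → r b c → r a c) ∧
     (∀ v a b c : V, r a v → r b v → r c v → r a b → r b c → r a c)) ↔
    ((¬ ∃ a b c d : V, r d a ∧ r d b ∧ r d c ∧ r a b ∧ r b c ∧ r c a) ∧
     (¬ ∃ a b c d : V, r a d ∧ r b d ∧ r c d ∧ r a b ∧ r b c ∧ r c a)) := by
  have asym : ∀ x y : V, r x y → r y x → False := by
    intro x y hxy hyx
    rcases eq_or_ne x y with rfl | hne
    · exact hirr x hxy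
    · rcases htour x y hne with ⟨_, h⟩ | ⟨_, h⟩
      · exact h hyx
      · exact h hxy
  have total : ∀ x y : V, ¬ r x y → x ≠ y → r y x := by
    intro x y hn hne
    rcases htour x y hne with ⟨h, _⟩ | ⟨h, _⟩
    · exact absurd h hn
    · exact h
  constructor
  · rintro ⟨h1, h2⟩
    constructor
    · rintro ⟨a, b, c, d, hda, hdb, hdc, hab, hbc, hca⟩
      exact asym a c (h1 d a b c hda hdb hdc hab hbc) hca
    · rintro ⟨a, b, c, d, had, hbd, hcd, hab, hbc, hca⟩
      exact asym a c (h2 d a b c had hbd hcd hab hbc) hca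
  · rintro ⟨h1, h2⟩
    constructor
    · intro v a b c hva hvb hvc hab hbc
      by_contra hac
      rcases eq_or_ne a c with rfl | hne
      · exact asym a b hab hbc
      · exact h1 ⟨a, b, c, v, hva, hvb, hvc, hab, hbc, total a c hac hne⟩
    · intro v a b c hav hbv hcv hab hbc
      by_contra hac
      rcases eq_or_ne a c with rfl | hne
      · exact asym a b hab hbc
      · exact h2 ⟨a, b, c, v, hav, hbv, hcv, hab, hbc, total a c hac hne⟩
end

section
/- Let T be a locally transitive tournament, v a vertex, and a ∈ N^+(v). Then N^+(a) ∩ N^+(v) is a terminal interval of N^+(v) in the linear order induced by the arcs of T, and N^+(a) ∩ N^-(v) is an initial interval of N^-(v) in the linear order induced by the arcs of T. -/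
/-- In a locally transitive tournament, for `a ∈ N⁺(v)`: `N⁺(a) ∩ N⁺(v)` is a
terminal interval (upward-closed set) of `N⁺(v)` and `N⁺(a) ∩ N⁻(v)` is an
initial interval (downward-closed set) of `N⁻(v)`, in the order `w < z ↔ r w z`
induced by the arcs. -/
theorem stmt_5 {V : Type*} (r : V → V → Prop)
    (hirr : ∀ x, ¬ r x x)
    (htour : ∀ x y : V, x ≠ y → Xor' (r x y) (r y x))
    (hloc : (∀ v a b c : V, r v a → r v b → r v c → r a b → r b c → r a c) ∧
            (∀ v a b c : V, r a v → r b v → r c v → r a b → r b c → r a c))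
    (v a : V) (ha : r v a) :
    (∀ w z : V, r v w → r v z → r a w → r w z → r a z) ∧
    (∀ w z : V, r w v → r z v → r a z → r w z → r a w) := by
  refine ⟨fun w z hvw hvz haw hwz => hloc.1 v a w z ha hvw hvz haw hwz, ?_⟩
  intro w z hwv hzv haz hwz
  by_contra hna
  have hne : a ≠ w := by rintro rfl; exact (htour v a (fun h => hirr v (h ▸ ha)) |>.elim (fun h => h.2 hwv) (fun h => h.2 ha))
  have hwa : r w a := ((htour a w hne).resolve_left (fun h => hna h.1)).1
  have hav : r a v := hloc.1 w a z v hwa hwz hwv haz hzv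
  have hvne : v ≠ a := by rintro rfl; exact hirr v ha
  exact ((htour v a hvne).elim (fun h => h.2 hav) (fun h => h.2 ha))
end

section
/- For every n, any balanced locally transitive tournament on 2n+1 vertices is isomorphic to the carousel tournament R_{2n+1}; i.e., there is a bijection f from Z/(2n+1) to its vertex set such that f(x) beats f(y) in T if and only if (y - x) mod (2n+1) ∈ {1,...,n}. -/
private lemma exists_source_aux {V : Type*} [DecidableEq V]
    (r : V → V → Prop) [DecidableRel r]
    (hirr : ∀ x, ¬ r x x)
    (htot : ∀ x y : V, x ≠ y → ¬ r x y → r y x)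
    (S : Finset V) (hS : S.Nonempty)
    (htrans : ∀ a ∈ S, ∀ b ∈ S, ∀ c ∈ S, r a b → r b c → r a c) :
    ∃ u ∈ S, ∀ w ∈ S, w ≠ u → r u w := by
  obtain ⟨u, huS, hmax⟩ := S.exists_max_image (fun u => (S.filter (fun z => r u z)).card) hS
  refine ⟨u, huS, ?_⟩
  intro w hwS hwu
  by_contra hcon
  have hwu' : r w u := htot u w (Ne.symm hwu) hcon
  have hsub : insert u (S.filter (fun z => r u z)) ⊆ S.filter (fun z => r w z) := by
    intro z hz
    rcases Finset.mem_insert.mp hz with rfl | hz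
    · exact Finset.mem_filter.mpr ⟨huS, hwu'⟩
    · obtain ⟨hzS, huz⟩ := Finset.mem_filter.mp hz
      exact Finset.mem_filter.mpr ⟨hzS, htrans w hwS u huS z hzS hwu' huz⟩
  have hnot : u ∉ S.filter (fun z => r u z) := by
    simp [hirr u]
  have h1 := Finset.card_le_card hsub
  rw [Finset.card_insert_of_notMem hnot] at h1
  have h2 := hmax w hwS
  omega

/-- Every balanced locally transitive tournament on `2n+1` vertices is isomorphic
to the carousel tournament `R_{2n+1}`. -/
theorem stmt_6 {V : Type*} [Fintype V] [DecidableEq V] (n : ℕ)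
    (r : V → V → Prop) [DecidableRel r]
    (hcard : Fintype.card V = 2 * n + 1)
    (hirr : ∀ x, ¬ r x x)
    (htour : ∀ x y : V, x ≠ y → Xor' (r x y) (r y x))
    (hbal : ∀ v : V, (Finset.univ.filter fun w => r v w).card = n)
    (hloc : (∀ v a b c : V, r v a → r v b → r v c → r a b → r b c → r a c) ∧
            (∀ v a b c : V, r a v → r b v → r c v → r a b → r b c → r a c)) :
    ∃ f : ZMod (2 * n + 1) ≃ V,
      ∀ x y : ZMod (2 * n + 1), r (f x) (f y) ↔ (y - x).val ∈ Finset.Icc 1 n := by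
  classical
  have hnb : ∀ x y : V, r x y → ¬ r y x := by
    intro x y h h'
    rcases eq_or_ne x y with rfl | hxy
    · exact hirr x h
    · rcases htour x y hxy with ⟨_, hb⟩ | ⟨_, ha⟩
      · exact hb h'
      · exact ha h
  have htot : ∀ x y : V, x ≠ y → ¬ r x y → r y x := by
    intro x y hxy h
    rcases htour x y hxy with ⟨ha, _⟩ | ⟨hb, _⟩
    · exact absurd ha h
    · exact hb
  -- out- and in-neighbourhoods
  set Np : V → Finset V := fun v => Finset.univ.filter (fun w => r v w) with hNp
  set Nm : V → Finset V := fun v => Finset.univ.filter (fun w => r w v) with hNm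
  have hNpmem : ∀ v w, w ∈ Np v ↔ r v w := by intro v w; simp [hNp]
  have hNmmem : ∀ v w, w ∈ Nm v ↔ r w v := by intro v w; simp [hNm]
  have hNpcard : ∀ v, (Np v).card = n := hbal
  have hNmcard : ∀ v, (Nm v).card = n := by
    intro v
    have hunion : Np v ∪ Nm v = Finset.univ.erase v := by
      ext w
      simp only [Finset.mem_union, Finset.mem_erase, Finset.mem_univ, and_true,
        hNpmem, hNmmem]
      constructor
      · rintro (h | h) <;> rintro rfl <;> exact hirr _ h
      · intro hwv
        rcases htour v w (Ne.symm hwv) with ⟨h, _⟩ | ⟨h, _⟩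
        · exact Or.inl h
        · exact Or.inr h
    have hdisj : Disjoint (Np v) (Nm v) := by
      rw [Finset.disjoint_left]
      intro w hw hw'
      exact hnb v w ((hNpmem v w).mp hw) ((hNmmem v w).mp hw')
    have h1 := Finset.card_union_of_disjoint hdisj
    rw [hunion, Finset.card_erase_of_mem (Finset.mem_univ v), Finset.card_univ,
      hcard, hNpcard] at h1
    omega
  -- trivial case n = 0
  rcases Nat.eq_zero_or_pos n with rfl | hn
  · have hc1 : Fintype.card (ZMod (2*0+1)) = Fintype.card V := by
      rw [ZMod.card, hcard]
    refine ⟨Fintype.equivOfCardEq hc1, ?_⟩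
    intro x y
    have hfe : (Fintype.equivOfCardEq hc1) x = (Fintype.equivOfCardEq hc1) y := by
      have hle : Fintype.card V ≤ 1 := by omega
      exact Fintype.card_le_one_iff.mp hle _ _
    constructor
    · intro h; rw [hfe] at h; exact absurd h (hirr _)
    · intro h; rw [Finset.mem_Icc] at h; omega
  -- main case: n ≥ 1
  have hsrcNp : ∀ v : V, ∃ u ∈ Np v, ∀ w ∈ Np v, w ≠ u → r u w := by
    intro v
    refine exists_source_aux r hirr htot (Np v) ?_ ?_
    · rw [← Finset.card_pos, hNpcard]; exact hn
    · intro a ha b hb c hc hab hbc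
      exact hloc.1 v a b c ((hNpmem v a).mp ha) ((hNpmem v b).mp hb)
        ((hNpmem v c).mp hc) hab hbc
  have hsrcNm : ∀ v : V, ∃ u ∈ Nm v, ∀ w ∈ Nm v, w ≠ u → r u w := by
    intro v
    refine exists_source_aux r hirr htot (Nm v) ?_ ?_
    · rw [← Finset.card_pos, hNmcard]; exact hn
    · intro a ha b hb c hc hab hbc
      exact hloc.2 v a b c ((hNmmem v a).mp ha) ((hNmmem v b).mp hb)
        ((hNmmem v c).mp hc) hab hbc
  choose σ hσmem hσsrc using hsrcNp
  choose τ hτmem hτsrc using hsrcNm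
  have hσ1 : ∀ v, r v (σ v) := fun v => (hNpmem _ _).mp (hσmem v)
  have hτ1 : ∀ v, r (τ v) v := fun v => (hNmmem _ _).mp (hτmem v)
  -- the out-neighbourhood of a source of Nm v
  have hsinkNp : ∀ v s : V, r s v → (∀ w, r w v → w ≠ s → r s w) →
      Np s = insert v ((Nm v).erase s) := by
    intro v s hsv hs
    have hsub : insert v ((Nm v).erase s) ⊆ Np s := by
      intro w hw
      rcases Finset.mem_insert.mp hw with rfl | hw
      · exact (hNpmem s w).mpr hsv
      · obtain ⟨hws, hwm⟩ := Finset.mem_erase.mp hw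
        exact (hNpmem _ _).mpr (hs w ((hNmmem _ _).mp hwm) hws)
    have hvnot : v ∉ (Nm v).erase s := by
      intro h
      exact hirr v ((hNmmem _ _).mp (Finset.mem_erase.mp h).2)
    have hcard' : (insert v ((Nm v).erase s)).card = n := by
      rw [Finset.card_insert_of_notMem hvnot,
        Finset.card_erase_of_mem ((hNmmem v s).mpr hsv), hNmcard]
      omega
    exact (Finset.eq_of_subset_of_card_le hsub (by rw [hNpcard, hcard'])).symm
  have hNpτ : ∀ v, Np (τ v) = insert v ((Nm v).erase (τ v)) := by
    intro v
    exact hsinkNp v (τ v) (hτ1 v)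
      (fun w hw hws => hτsrc v w ((hNmmem v w).mpr hw) hws)
  -- Lemma A : σ v beats τ v
  have hστ : ∀ v, r (σ v) (τ v) := by
    intro v
    have hne : σ v ≠ τ v := by
      intro h
      have hh := hτ1 v
      rw [← h] at hh
      exact hnb v (σ v) (hσ1 v) hh
    have hnr : ¬ r (τ v) (σ v) := by
      intro h
      have hmem : σ v ∈ Np (τ v) := (hNpmem _ _).mpr h
      rw [hNpτ v] at hmem
      rcases Finset.mem_insert.mp hmem with h' | h'
      · have hh := hσ1 v
        rw [h'] at hh
        exact hirr v hh
      · exact hnb v (σ v) (hσ1 v) ((hNmmem v (σ v)).mp (Finset.mem_erase.mp h').2)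
    exact htot (τ v) (σ v) (Ne.symm hne) hnr
  -- Lemma B : Np (σ v) = insert (τ v) ((Np v).erase (σ v))
  have hB : ∀ v, Np (σ v) = insert (τ v) ((Np v).erase (σ v)) := by
    intro v
    have hsub : insert (τ v) ((Np v).erase (σ v)) ⊆ Np (σ v) := by
      intro w hw
      rcases Finset.mem_insert.mp hw with rfl | hw
      · exact (hNpmem _ _).mpr (hστ v)
      · obtain ⟨hws, hwp⟩ := Finset.mem_erase.mp hw
        exact (hNpmem _ _).mpr (hσsrc v w hwp hws)
    have hτnot : τ v ∉ (Np v).erase (σ v) := by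
      intro h
      exact hnb (τ v) v (hτ1 v) ((hNpmem _ _).mp (Finset.mem_erase.mp h).2)
    have hcard' : (insert (τ v) ((Np v).erase (σ v))).card = n := by
      rw [Finset.card_insert_of_notMem hτnot, Finset.card_erase_of_mem (hσmem v),
        hNpcard]
      omega
    exact (Finset.eq_of_subset_of_card_le hsub (by rw [hNpcard, hcard'])).symm
  -- sink property and injectivity of σ
  have hsink : ∀ v z, r z (σ v) → z ≠ v → r z v := by
    intro v z hz hne
    by_contra hcon
    have hvz : r v z := htot z v hne hcon
    have hzσ : z ≠ σ v := by intro h; rw [h] at hz; exact hirr _ hz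
    exact hnb z (σ v) hz (hσsrc v z ((hNpmem v z).mpr hvz) hzσ)
  have hσinj : Function.Injective σ := by
    intro u w h
    by_contra hne
    have ha := hσ1 u
    rw [h] at ha
    have hb' := hσ1 w
    rw [← h] at hb'
    have h1 : r u w := hsink w u ha hne
    have h2 : r w u := hsink u w hb' (Ne.symm hne)
    exact hnb u w h1 h2
  -- the main induction
  have hQ : ∀ v k, k ≤ n → ∃ B : Finset V, B ⊆ Nm v ∧
      Np (σ^[k] v) = (Np v \ (Finset.Icc 1 k).image (fun j => σ^[j] v)) ∪ B ∧
      (∀ j, 1 ≤ j → j ≤ k → r v (σ^[j] v)) ∧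
      (∀ b ∈ B, ∀ w ∈ Np v \ (Finset.Icc 1 k).image (fun j => σ^[j] v), r w b) := by
    intro v k
    induction k with
    | zero =>
      intro _
      refine ⟨∅, Finset.empty_subset _, by simp, ?_, by simp⟩
      intro j h1 h2; omega
    | succ k ih =>
      intro hk1
      obtain ⟨B, hBsub, hBeq, hmon, hWB⟩ := ih (by omega)
      set u := σ^[k] v with hu
      set A := (Finset.Icc 1 k).image (fun j => σ^[j] v) with hA
      set Rk := Np v \ A with hRk
      have hsu : σ^[k+1] v = σ u := Function.iterate_succ_apply' σ k v
      -- Rk nonempty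
      have hAcard : A.card ≤ k := le_trans Finset.card_image_le (by simp)
      have hRkpos : 0 < Rk.card := by
        have h2 := Finset.le_card_sdiff A (Np v)
        rw [hNpcard, ← hRk] at h2
        omega
      obtain ⟨w0, hw0⟩ := Finset.card_pos.mp hRkpos
      -- σ u ∈ Rk
      have hσuNpu : σ u ∈ Np u := hσmem u
      have hσuRk : σ u ∈ Rk := by
        rw [hBeq] at hσuNpu
        rcases Finset.mem_union.mp hσuNpu with h | h
        · exact h
        · exfalso
          have hw0ne : w0 ≠ σ u := by
            intro he
            have hh := hWB (σ u) h w0 hw0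
            rw [he] at hh
            exact hirr _ hh
          have h1 : r w0 (σ u) := hWB (σ u) h w0 hw0
          have h2 : r (σ u) w0 := hσsrc u w0 (by rw [hBeq]; exact Finset.mem_union_left _ hw0) hw0ne
          exact hnb _ _ h1 h2
      have hσuNpv : σ u ∈ Np v := (Finset.mem_sdiff.mp hσuRk).1
      -- τ u beats v
      have hτuv : r (τ u) v := by
        rcases Nat.eq_zero_or_pos k with rfl | hk0
        · have : u = v := by rw [hu, Function.iterate_zero_apply]
          rw [this]; exact hτ1 v
        · have hvu : r v u := hmon k hk0 le_rfl
          have hvne : v ≠ τ u := by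
            intro hveq
            have hw0Npv : w0 ∈ Np v := (Finset.mem_sdiff.mp hw0).1
            have hw0Npτu : w0 ∈ Np (τ u) := by rw [← hveq]; exact hw0Npv
            rw [hNpτ u] at hw0Npτu
            have hw0Npu : w0 ∈ Np u := by rw [hBeq]; exact Finset.mem_union_left _ hw0
            have hruw0 : r u w0 := (hNpmem u w0).mp hw0Npu
            rcases Finset.mem_insert.mp hw0Npτu with h' | h'
            · rw [h'] at hruw0; exact hirr u hruw0
            · exact hnb u w0 hruw0 ((hNmmem u w0).mp (Finset.mem_erase.mp h').2)
          exact hτsrc u v ((hNmmem u v).mpr hvu) hvne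
      -- every element of Rk beats τ u
      have hRkτ : ∀ w ∈ Rk, r w (τ u) := by
        intro w hw
        have hwNpu : w ∈ Np u := by rw [hBeq]; exact Finset.mem_union_left _ hw
        have hruw : r u w := (hNpmem u w).mp hwNpu
        have hwne : w ≠ τ u := by
          intro he
          rw [he] at hruw
          exact hnb u (τ u) hruw (hτ1 u)
        have hnr : ¬ r (τ u) w := by
          intro h
          have : w ∈ Np (τ u) := (hNpmem _ _).mpr h
          rw [hNpτ u] at this
          rcases Finset.mem_insert.mp this with h' | h'
          · rw [h'] at hruw; exact hirr u hruw
          · exact hnb u w hruw ((hNmmem u w).mp (Finset.mem_erase.mp h').2)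
        exact htot (τ u) w (Ne.symm hwne) hnr
      -- τ u ∉ B, σ u ∉ B
      have hτuB : τ u ∉ B := by
        intro h
        have : τ u ∈ Np u := by rw [hBeq]; exact Finset.mem_union_right _ h
        exact hnb u (τ u) ((hNpmem _ _).mp this) (hτ1 u)
      have hσuB : σ u ∉ B := by
        intro h
        exact hnb v (σ u) ((hNpmem _ _).mp hσuNpv) ((hNmmem _ _).mp (hBsub h))
      have hτuRk : τ u ∉ Rk := by
        intro h
        exact hnb (τ u) v hτuv ((hNpmem _ _).mp (Finset.mem_sdiff.mp h).1)
      have himg : (Finset.Icc 1 (k+1)).image (fun j => σ^[j] v)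
          = insert (σ u) A := by
        rw [hA, ← hsu]
        have : Finset.Icc 1 (k+1) = insert (k+1) (Finset.Icc 1 k) := by
          ext j; simp only [Finset.mem_Icc, Finset.mem_insert]; omega
        rw [this, Finset.image_insert]
      refine ⟨insert (τ u) B, Finset.insert_subset ((hNmmem _ _).mpr hτuv) hBsub,
        ?_, ?_, ?_⟩
      · -- set equality
        rw [hsu, hB u, hBeq, himg, Finset.sdiff_insert]
        ext w
        simp only [Finset.mem_insert, Finset.mem_erase, Finset.mem_union,
          Finset.mem_sdiff, ← hRk]
        constructor
        · rintro (rfl | ⟨hwne, (hw | hw)⟩)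
          · exact Or.inr (Or.inl rfl)
          · exact Or.inl ⟨hwne, hw⟩
          · exact Or.inr (Or.inr hw)
        · rintro (⟨hwne, hw⟩ | (rfl | hw))
          · exact Or.inr ⟨hwne, Or.inl hw⟩
          · exact Or.inl rfl
          · refine Or.inr ⟨?_, Or.inr hw⟩
            rintro rfl
            exact hσuB hw
      · intro j h1 h2
        rcases Nat.lt_or_ge j (k+1) with h | h
        · exact hmon j h1 (by omega)
        · have : j = k + 1 := by omega
          subst this
          rw [hsu]
          exact (hNpmem _ _).mp hσuNpv
      · intro b hb w hw
        have hwRk : w ∈ Rk := by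
          rw [himg] at hw
          obtain ⟨hw1, hw2⟩ := Finset.mem_sdiff.mp hw
          rw [Finset.mem_insert] at hw2
          push_neg at hw2
          exact Finset.mem_sdiff.mpr ⟨hw1, hw2.2⟩
        rcases Finset.mem_insert.mp hb with rfl | hb
        · exact hRkτ w hwRk
        · exact hWB b hb w hwRk
  -- crux : r v (σ^[j] v) for 1 ≤ j ≤ n
  have hcrux : ∀ v j, 1 ≤ j → j ≤ n → r v (σ^[j] v) := by
    intro v j h1 h2
    obtain ⟨B, _, _, hmon, _⟩ := hQ v n le_rfl
    exact hmon j h1 h2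
  -- Np v is exactly the first n iterates
  have hNpEq : ∀ v, Np v = (Finset.Icc 1 n).image (fun j => σ^[j] v) := by
    intro v
    have hA_sub : (Finset.Icc 1 n).image (fun j => σ^[j] v) ⊆ Np v := by
      intro w hw
      obtain ⟨j, hj, rfl⟩ := Finset.mem_image.mp hw
      rw [Finset.mem_Icc] at hj
      exact (hNpmem _ _).mpr (hcrux v j hj.1 hj.2)
    have hinj : Set.InjOn (fun j => σ^[j] v) (Finset.Icc 1 n : Finset ℕ) := by
      intro a ha b hb hab'
      have hab : σ^[a] v = σ^[b] v := hab'
      simp only [Finset.coe_Icc, Set.mem_Icc] at ha hb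
      by_contra hne
      rcases Nat.lt_or_ge a b with h | h
      · have : σ^[a] (σ^[b-a] v) = σ^[a] v := by
          rw [← Function.iterate_add_apply]
          have : a + (b - a) = b := by omega
          rw [this, hab]
        have hv : σ^[b-a] v = v := (hσinj.iterate a) this
        have := hcrux v (b-a) (by omega) (by omega)
        rw [hv] at this
        exact hirr v this
      · have hlt : b < a := by omega
        have : σ^[b] (σ^[a-b] v) = σ^[b] v := by
          rw [← Function.iterate_add_apply]
          have : b + (a - b) = a := by omega
          rw [this, hab]
        have hv : σ^[a-b] v = v := (hσinj.iterate b) this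
        have := hcrux v (a-b) (by omega) (by omega)
        rw [hv] at this
        exact hirr v this
    have hAcard : ((Finset.Icc 1 n).image (fun j => σ^[j] v)).card = n := by
      rw [Finset.card_image_of_injOn hinj]
      simp
    exact (Finset.eq_of_subset_of_card_le hA_sub (by rw [hNpcard, hAcard])).symm
  -- period and single orbit
  have hkey : ∀ v : V, σ^[2*n+1] v = v ∧ ∀ w : V, ∃ m, m < 2*n+1 ∧ σ^[m] v = w := by
    intro v
    obtain ⟨B, hBsub, hBeq, hmon, _⟩ := hQ v n le_rfl
    have hRn : Np v \ (Finset.Icc 1 n).image (fun j => σ^[j] v) = ∅ := by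
      rw [hNpEq v, Finset.sdiff_self]
    have hNpn : Np (σ^[n] v) = B := by rw [hBeq, hRn, Finset.empty_union]
    have hNpnm : Np (σ^[n] v) = Nm v := by
      refine Finset.eq_of_subset_of_card_le (by rw [hNpn]; exact hBsub) ?_
      rw [hNmcard, hNpcard]
    -- s := σ^[n+1] v is the source of Nm v
    set s := σ^[n+1] v with hs
    have hss : s = σ (σ^[n] v) := Function.iterate_succ_apply' σ n v
    have hsNm : s ∈ Nm v := by
      rw [← hNpnm, hss]
      exact hσmem (σ^[n] v)
    have hsv : r s v := (hNmmem v s).mp hsNm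
    have hssrc : ∀ w, r w v → w ≠ s → r s w := by
      intro w hw hwne
      have hwNp : w ∈ Np (σ^[n] v) := by
        rw [hNpnm]; exact (hNmmem v w).mpr hw
      rw [hss]
      exact hσsrc (σ^[n] v) w hwNp (by rw [← hss]; exact hwne)
    have hNps : Np s = insert v ((Nm v).erase s) := hsinkNp v s hsv hssrc
    have hvNps : v ∈ Np s := by rw [hNps]; exact Finset.mem_insert_self v _
    rw [hNpEq s] at hvNps
    obtain ⟨j, hj, hjv⟩ := Finset.mem_image.mp hvNps
    rw [Finset.mem_Icc] at hj
    have hjv' : σ^[j + (n+1)] v = v := by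
      rw [Function.iterate_add_apply]; exact hjv
    set p := j + (n+1) with hp
    have hp1 : n + 2 ≤ p := by omega
    have hp2 : p ≤ 2*n+1 := by omega
    -- the orbit set
    set O := (Finset.range p).image (fun m => σ^[m] v) with hO
    have hOiter : ∀ m, σ^[m] v ∈ O := by
      intro m
      induction m using Nat.strong_induction_on with
      | _ m ihm =>
        rcases Nat.lt_or_ge m p with h | h
        · exact Finset.mem_image.mpr ⟨m, Finset.mem_range.mpr h, rfl⟩
        · have : σ^[m] v = σ^[m - p] v := by
            conv_lhs => rw [show m = (m - p) + p by omega]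
            rw [Function.iterate_add_apply, hjv']
          rw [this]
          exact ihm (m - p) (by omega)
    have hOuniv : ∀ w : V, ∃ m, σ^[m] v = w := by
      intro w
      rcases eq_or_ne w v with rfl | hwv
      · exact ⟨0, rfl⟩
      rcases htour v w (Ne.symm hwv) with ⟨h, _⟩ | ⟨h, _⟩
      · have : w ∈ Np v := (hNpmem v w).mpr h
        rw [hNpEq v] at this
        obtain ⟨m, _, hm⟩ := Finset.mem_image.mp this
        exact ⟨m, hm⟩
      · have : w ∈ Np (σ^[n] v) := by rw [hNpnm]; exact (hNmmem v w).mpr h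
        rw [hNpEq (σ^[n] v)] at this
        obtain ⟨m, _, hm⟩ := Finset.mem_image.mp this
        rw [← Function.iterate_add_apply] at hm
        exact ⟨m + n, hm⟩
    have hsubO : Finset.univ ⊆ O := by
      intro w _
      obtain ⟨m, hm⟩ := hOuniv w
      rw [← hm]
      exact hOiter m
    have hcardO : 2*n+1 ≤ O.card := by
      have := Finset.card_le_card hsubO
      rwa [Finset.card_univ, hcard] at this
    have hcardO' : O.card ≤ p := le_trans Finset.card_image_le (by simp)
    have hpeq : p = 2*n+1 := by omega
    constructor
    · rw [← hpeq]; exact hjv'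
    · intro w
      obtain ⟨m', hm'⟩ := hOuniv w
      have hmem : σ^[m'] v ∈ O := hOiter m'
      obtain ⟨m, hmr, hm⟩ := Finset.mem_image.mp hmem
      rw [Finset.mem_range, hpeq] at hmr
      exact ⟨m, hmr, by rw [hm, hm']⟩
  -- construct the equivalence
  have hVne : Nonempty V := by
    rw [← Fintype.card_pos_iff, hcard]; omega
  obtain ⟨v0⟩ := hVne
  haveI : NeZero (2*n+1) := ⟨by omega⟩
  set g : ZMod (2*n+1) → V := fun x => σ^[x.val] v0 with hg
  have hgsurj : Function.Surjective g := by
    intro w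
    obtain ⟨m, hm, hmw⟩ := (hkey v0).2 w
    refine ⟨(m : ZMod (2*n+1)), ?_⟩
    show σ^[((m : ZMod (2*n+1))).val] v0 = w
    rw [ZMod.val_natCast, Nat.mod_eq_of_lt hm]
    exact hmw
  have hgbij : Function.Bijective g := by
    rw [Fintype.bijective_iff_surjective_and_card]
    exact ⟨hgsurj, by rw [ZMod.card, hcard]⟩
  refine ⟨Equiv.ofBijective g hgbij, ?_⟩
  intro x y
  have hiter_mod : ∀ (m : ℕ) (u : V), σ^[m % (2*n+1)] u = σ^[m] u := by
    intro m u
    exact Function.IsPeriodicPt.iterate_mod_apply (hkey u).1 m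
  set d := (y - x).val with hd
  have hdlt : d < 2*n+1 := ZMod.val_lt _
  have hfy : (Equiv.ofBijective g hgbij) y = σ^[d] ((Equiv.ofBijective g hgbij) x) := by
    show g y = σ^[d] (g x)
    simp only [hg]
    rw [← Function.iterate_add_apply]
    have hvadd : (d + x.val) % (2*n+1) = y.val := by
      have h1 := ZMod.val_add (y - x) x
      rw [sub_add_cancel] at h1
      rw [← hd] at h1
      exact h1.symm
    calc σ^[y.val] v0 = σ^[(d + x.val) % (2*n+1)] v0 := by rw [hvadd]
      _ = σ^[d + x.val] v0 := hiter_mod _ _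
  rw [hfy]
  set u := (Equiv.ofBijective g hgbij) x
  rw [Finset.mem_Icc]
  constructor
  · intro hr
    by_contra hcon
    push_neg at hcon
    rcases Nat.eq_zero_or_pos d with hd0 | hd1
    · rw [hd0, Function.iterate_zero_apply] at hr
      exact hirr _ hr
    · have hdn : n < d := hcon hd1
      have h1 : σ^[2*n+1-d] (σ^[d] u) = u := by
        rw [← Function.iterate_add_apply]
        have : 2*n+1-d+d = 2*n+1 := by omega
        rw [this]
        exact (hkey u).1
      have h2 : r (σ^[d] u) (σ^[2*n+1-d] (σ^[d] u)) :=
        hcrux (σ^[d] u) (2*n+1-d) (by omega) (by omega)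
      rw [h1] at h2
      exact hnb _ _ h2 hr
  · intro hd'
    exact hcrux u d hd'.1 hd'.2
end

section
/- Every tournament on n vertices contains at most (n^3 - n)/24 directed 3-cycles, and for odd n this bound is attained by any tournament in which every vertex has outdegree (n-1)/2. -/
open Finset
open scoped Classical

section Aux
variable {V : Type*} [Fintype V] {r : V → V → Prop}

private def trans3 (r : V → V → Prop) (s : Finset V) : Prop :=
  ∃ v ∈ s, ∀ w ∈ s, w ≠ v → r v w

private def cyc3 (r : V → V → Prop) (s : Finset V) : Prop :=
  ∃ a ∈ s, ∃ b ∈ s, ∃ c ∈ s, r a b ∧ r b c ∧ r c a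

variable (hirr : ∀ x, ¬ r x x) (htour : ∀ x y : V, x ≠ y → Xor' (r x y) (r y x))

include hirr htour

private lemma asym (x y : V) (h : r x y) : ¬ r y x := by
  by_cases hxy : x = y
  · subst hxy; exact absurd h (hirr x)
  · rcases htour x y hxy with ⟨h1, h2⟩ | ⟨h1, h2⟩
    · exact h2
    · exact absurd h h2

private lemma cyc_iff_not_trans {s : Finset V} (hs : s.card = 3) :
    cyc3 r s ↔ ¬ trans3 r s := by
  obtain ⟨a, b, c, hab, hac, hbc, rfl⟩ := Finset.card_eq_three.mp hs
  have notcyc : ∀ x y z : V, r x y → r y z → r z x →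
      ({x, y, z} : Finset V) ⊆ {a, b, c} → ¬ trans3 r {a, b, c} := by
    rintro x y z h1 h2 h3 hsub ⟨v, hv, hdom⟩
    have hxy : x ≠ y := fun h => hirr y (h ▸ h1)
    have hyz : y ≠ z := fun h => hirr z (h ▸ h2)
    have hzx : z ≠ x := fun h => hirr x (h ▸ h3)
    have hcard : ({x, y, z} : Finset V).card = 3 :=
      Finset.card_eq_three.mpr ⟨x, y, z, hxy, hzx.symm, hyz, rfl⟩
    have heq : ({x, y, z} : Finset V) = {a, b, c} :=
      Finset.eq_of_subset_of_card_le hsub (by rw [hs, hcard])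
    rw [← heq] at hv hdom
    simp only [mem_insert, mem_singleton] at hv
    rcases hv with rfl | rfl | rfl
    · exact asym hirr htour z v h3 (hdom z (by simp) hzx)
    · exact asym hirr htour x v h1 (hdom x (by simp) hxy)
    · exact asym hirr htour y v h2 (hdom y (by simp) hyz)
  constructor
  · rintro ⟨x, hx, y, hy, z, hz, h1, h2, h3⟩
    refine notcyc x y z h1 h2 h3 ?_
    intro w hw
    simp only [mem_insert, mem_singleton] at hw
    rcases hw with rfl | rfl | rfl <;> assumption
  · intro hnt
    rcases htour a b hab with ⟨r1, n1⟩ | ⟨r1, n1⟩ <;>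
      rcases htour a c hac with ⟨r2, n2⟩ | ⟨r2, n2⟩ <;>
      rcases htour b c hbc with ⟨r3, n3⟩ | ⟨r3, n3⟩
    case mpr.inl.inr.inl => exact ⟨a, by simp, b, by simp, c, by simp, r1, r3, r2⟩
    case mpr.inr.inl.inr => exact ⟨a, by simp, c, by simp, b, by simp, r2, r3, r1⟩
    all_goals {
      refine absurd ?_ hnt
      first
      | (refine ⟨a, by simp, fun w hw hwv => ?_⟩
         simp only [mem_insert, mem_singleton] at hw
         rcases hw with rfl | rfl | rfl <;>
           first | exact absurd rfl hwv | exact r1 | exact r2 | exact r3)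
      | (refine ⟨b, by simp, fun w hw hwv => ?_⟩
         simp only [mem_insert, mem_singleton] at hw
         rcases hw with rfl | rfl | rfl <;>
           first | exact absurd rfl hwv | exact r1 | exact r2 | exact r3)
      | (refine ⟨c, by simp, fun w hw hwv => ?_⟩
         simp only [mem_insert, mem_singleton] at hw
         rcases hw with rfl | rfl | rfl <;>
           first | exact absurd rfl hwv | exact r1 | exact r2 | exact r3) }

private lemma trans_card :
    ((univ.powersetCard 3).filter (trans3 r)).card
      = ∑ v : V, ((univ.filter (r v)).card).choose 2 := by
  have h1 : ∀ v : V, ((univ.filter (r v)).card).choose 2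
      = ((univ.filter (r v)).powersetCard 2).card := fun v =>
    (Finset.card_powersetCard 2 _).symm
  simp only [h1]
  rw [← Finset.card_sigma]
  refine (Finset.card_bij (fun p _ => insert p.1 p.2) ?_ ?_ ?_).symm
  · rintro ⟨v, s⟩ hp
    simp only [Finset.mem_sigma, Finset.mem_univ, true_and,
      Finset.mem_powersetCard] at hp
    obtain ⟨hsub, hcard⟩ := hp
    have hv : v ∉ s := fun hv => hirr v (Finset.mem_filter.mp (hsub hv)).2
    simp only [Finset.mem_filter, Finset.mem_powersetCard]
    refine ⟨⟨Finset.subset_univ _, by rw [Finset.card_insert_of_notMem hv, hcard]⟩,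
      v, Finset.mem_insert_self _ _, ?_⟩
    intro w hw hwv
    rcases Finset.mem_insert.mp hw with rfl | hw
    · exact absurd rfl hwv
    · exact (Finset.mem_filter.mp (hsub hw)).2
  · rintro ⟨v, s⟩ hp ⟨v', s'⟩ hp' heq
    simp only [Finset.mem_sigma, Finset.mem_univ, true_and,
      Finset.mem_powersetCard] at hp hp'
    dsimp only at heq
    have hvv' : v = v' := by
      by_contra hne
      have h1 : v' ∈ insert v s := heq ▸ Finset.mem_insert_self v' s'
      have h2 : v ∈ insert v' s' := heq ▸ Finset.mem_insert_self v s
      have hv's : v' ∈ s := by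
        rcases Finset.mem_insert.mp h1 with h | h
        · exact absurd h.symm hne
        · exact h
      have hvs' : v ∈ s' := by
        rcases Finset.mem_insert.mp h2 with h | h
        · exact absurd h hne
        · exact h
      exact asym hirr htour v v' (Finset.mem_filter.mp (hp.1 hv's)).2
        (Finset.mem_filter.mp (hp'.1 hvs')).2
    subst hvv'
    have hvs : v ∉ s := fun hv => hirr v (Finset.mem_filter.mp (hp.1 hv)).2
    have hvs' : v ∉ s' := fun hv => hirr v (Finset.mem_filter.mp (hp'.1 hv)).2
    have : s = s' := by
      rw [← Finset.erase_insert hvs, ← Finset.erase_insert hvs', heq]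
    simp [this]
  · intro t ht
    simp only [Finset.mem_filter, Finset.mem_powersetCard] at ht
    obtain ⟨⟨-, hcard⟩, v, hv, hdom⟩ := ht
    refine ⟨⟨v, t.erase v⟩, ?_, ?_⟩
    · simp only [Finset.mem_sigma, Finset.mem_univ, true_and,
        Finset.mem_powersetCard]
      constructor
      · intro w hw
        have hw' := Finset.mem_of_mem_erase hw
        have hne := Finset.ne_of_mem_erase hw
        exact Finset.mem_filter.mpr ⟨Finset.mem_univ _, hdom w hw' hne⟩
      · rw [Finset.card_erase_of_mem hv, hcard]
    · exact Finset.insert_erase hv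

private lemma count_eq :
    ((univ.powersetCard 3).filter (cyc3 r)).card
      + ∑ v : V, ((univ.filter (r v)).card).choose 2
      = (Fintype.card V).choose 3 := by
  rw [← trans_card hirr htour]
  have h := Finset.card_filter_add_card_filter_not
    (s := univ.powersetCard 3) (p := cyc3 r)
  have h2 : (univ.powersetCard 3).filter (fun s => ¬ cyc3 r s)
      = (univ.powersetCard 3).filter (trans3 r) := by
    refine Finset.filter_congr ?_
    intro s hs
    have hcard : s.card = 3 := (Finset.mem_powersetCard.mp hs).2
    rw [cyc_iff_not_trans hirr htour hcard]
    simp only [not_not]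
  rw [h2] at h
  rw [h, Finset.card_powersetCard, Finset.card_univ]

omit [Fintype V] in
private lemma ite_key (v w : V) :
    (if r v w then 1 else 0) + (if r w v then 1 else 0)
      + (if v = w then 1 else 0) = 1 := by
  by_cases h : v = w
  · subst h; simp [hirr v]
  · rcases htour v w h with ⟨h1, h2⟩ | ⟨h1, h2⟩ <;> simp [h, h1, h2]

private lemma deg_sum :
    ∑ v : V, (univ.filter (r v)).card
      + ∑ v : V, (univ.filter (r v)).card
      + Fintype.card V = Fintype.card V * Fintype.card V := by
  have key : ∑ v : V, ∑ w : V,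
      ((if r v w then 1 else 0) + (if r w v then 1 else 0)
        + (if v = w then 1 else 0)) = Fintype.card V * Fintype.card V := by
    simp only [fun v w => ite_key hirr htour v w]
    simp [Finset.card_univ, mul_comm]
  have e1 : ∀ v : V, (univ.filter (r v)).card
      = ∑ w : V, if r v w then 1 else 0 := fun v => Finset.card_filter _ _
  calc ∑ v : V, (univ.filter (r v)).card + ∑ v : V, (univ.filter (r v)).card
        + Fintype.card V
      = ∑ v : V, ∑ w : V, (if r v w then 1 else 0)
        + ∑ v : V, ∑ w : V, (if r w v then 1 else 0)
        + ∑ v : V, ∑ w : V, (if v = w then 1 else 0) := by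
        rw [Finset.sum_comm (f := fun v w => if r w v then 1 else 0)]
        simp only [← e1]
        congr 1
        simp [Finset.card_univ]
    _ = Fintype.card V * Fintype.card V := by
        rw [← key, ← Finset.sum_add_distrib, ← Finset.sum_add_distrib]
        congr 1; ext v
        rw [← Finset.sum_add_distrib, ← Finset.sum_add_distrib]

end Aux

private lemma cast_choose_three (m : ℕ) :
    ((m.choose 3 : ℚ)) = (m : ℚ) * ((m : ℚ) - 1) * ((m : ℚ) - 2) / 6 := by
  induction m with
  | zero => simp
  | succ m ih =>
    rw [Nat.choose_succ_succ' m 2, Nat.cast_add, ih, Nat.cast_choose_two]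
    push_cast
    ring

open scoped Classical in
/-- Every tournament on `n` vertices has at most `(n³ - n)/24` directed 3-cycles,
and for odd `n` this bound is attained by any tournament in which every vertex
has outdegree `(n-1)/2`. -/
theorem stmt_8 {V : Type*} [Fintype V] (r : V → V → Prop)
    (hirr : ∀ x, ¬ r x x)
    (htour : ∀ x y : V, x ≠ y → Xor' (r x y) (r y x)) :
    (((Finset.univ.powersetCard 3).filter
        (fun s => ∃ a ∈ s, ∃ b ∈ s, ∃ c ∈ s, r a b ∧ r b c ∧ r c a)).card : ℚ) ≤
      (((Fintype.card V : ℚ)) ^ 3 - (Fintype.card V : ℚ)) / 24 ∧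
    (Odd (Fintype.card V) →
      (∀ v : V, (Finset.univ.filter fun w => r v w).card = (Fintype.card V - 1) / 2) →
      (((Finset.univ.powersetCard 3).filter
          (fun s => ∃ a ∈ s, ∃ b ∈ s, ∃ c ∈ s, r a b ∧ r b c ∧ r c a)).card : ℚ) =
        (((Fintype.card V : ℚ)) ^ 3 - (Fintype.card V : ℚ)) / 24) := by
  have hCdef : ((Finset.univ.powersetCard 3).filter
      (fun s => ∃ a ∈ s, ∃ b ∈ s, ∃ c ∈ s, r a b ∧ r b c ∧ r c a))
      = (univ.powersetCard 3).filter (cyc3 r) := by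
    ext s; simp only [Finset.mem_filter, cyc3]
  rw [hCdef]
  set n := Fintype.card V with hn
  set d : V → ℕ := fun v => (univ.filter (r v)).card with hd
  set C : ℕ := ((univ.powersetCard 3).filter (cyc3 r)).card with hC
  set N : ℚ := (n : ℚ) with hN
  set D : ℚ := ∑ v : V, (d v : ℚ) with hDdef
  set S2 : ℚ := ∑ v : V, (d v : ℚ) ^ 2 with hS2def
  have hcount := count_eq hirr htour
  have hdeg := deg_sum hirr htour
  have hDval : D = (N ^ 2 - N) / 2 := by
    have : (↑(∑ v : V, d v) + ↑(∑ v : V, d v) + (n : ℚ)) = (n : ℚ) * n := by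
      exact_mod_cast congrArg (Nat.cast : ℕ → ℚ) hdeg
    push_cast at this
    rw [hDdef]
    nlinarith [this]
  have hcauchy : D ^ 2 ≤ N * S2 := by
    have := sq_sum_le_card_mul_sum_sq (s := (univ : Finset V))
      (f := fun v => (d v : ℚ))
    simpa [Finset.card_univ, ← hn, ← hN, ← hDdef, ← hS2def] using this
  have hS2nonneg : (0 : ℚ) ≤ S2 := Finset.sum_nonneg fun v _ => sq_nonneg _
  have hCn : (C : ℚ) + ∑ v : V, ((d v).choose 2 : ℚ) = (n.choose 3 : ℚ) := by
    exact_mod_cast congrArg (Nat.cast : ℕ → ℚ) hcount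
  have hch2 : ∑ v : V, ((d v).choose 2 : ℚ) = (S2 - D) / 2 := by
    calc ∑ v : V, ((d v).choose 2 : ℚ)
        = ∑ v : V, ((d v : ℚ) ^ 2 - (d v : ℚ)) / 2 := by
          refine Finset.sum_congr rfl fun v _ => ?_
          rw [Nat.cast_choose_two]; ring
      _ = (S2 - D) / 2 := by
          rw [← Finset.sum_div, Finset.sum_sub_distrib]
  have hc3 : (n.choose 3 : ℚ) = N * (N - 1) * (N - 2) / 6 := cast_choose_three n
  have hCval : (C : ℚ) = N * (N - 1) * (N - 2) / 6 - (S2 - D) / 2 := by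
    rw [← hc3, ← hCn, hch2]; ring
  constructor
  · rcases Nat.eq_zero_or_pos n with h0 | hpos
    · have hNzero : N = 0 := by rw [hN, h0]; norm_num
      have hempty : IsEmpty V := Fintype.card_eq_zero_iff.mp h0
      have hD0 : D = 0 := by rw [hDval, hNzero]; norm_num
      have hS20 : S2 = 0 := by
        rw [hS2def, Finset.univ_eq_empty, Finset.sum_empty]
      rw [hCval, hNzero, hD0, hS20]; norm_num
    · have hN1 : (1 : ℚ) ≤ N := by
        rw [hN]; exact_mod_cast hpos
      have hcau2 : ((N ^ 2 - N) / 2) ^ 2 ≤ N * S2 := hDval ▸ hcauchy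
      rw [hCval, hDval]
      nlinarith [hcau2, hN1, hS2nonneg, mul_nonneg (by linarith : (0:ℚ) ≤ N) hS2nonneg]
  · intro hodd hreg
    obtain ⟨k, hk⟩ := hodd
    have hdk : ∀ v : V, d v = k := by
      intro v
      have h := hreg v
      change (univ.filter (fun w => r v w)).card = k
      rw [h, hk]
      omega
    have hsum2 : ∑ v : V, ((d v).choose 2 : ℚ) = N * ((k : ℚ) * ((k : ℚ) - 1) / 2) := by
      have : ∀ v : V, ((d v).choose 2 : ℚ) = (k : ℚ) * ((k : ℚ) - 1) / 2 := by
        intro v; rw [hdk v, Nat.cast_choose_two]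
      rw [Finset.sum_congr rfl fun v _ => this v, Finset.sum_const, Finset.card_univ,
        ← hn, nsmul_eq_mul, hN]
    have hNk : N = 2 * (k : ℚ) + 1 := by
      rw [hN, hk]; push_cast; ring
    have : (C : ℚ) = (n.choose 3 : ℚ) - N * ((k : ℚ) * ((k : ℚ) - 1) / 2) := by
      rw [← hsum2]; linarith [hCn]
    rw [this, hc3, hNk]
    ring
end

section
/- The function f(t) = (1-t)^3 · (t + (1-t)/8) / (1 - t^4) on the open interval (0,1) attains its maximum value 1 + (3^{5/3} - 3^{7/3})/8 at t = (2·3^{2/3} - 3^{1/3} - 2)/5. -/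
open Real in
/-- The function `f(t) = (1-t)³(t + (1-t)/8)/(1-t⁴)` on `(0,1)` attains its maximum
value `1 + (3^{5/3} - 3^{7/3})/8` at `t = (2·3^{2/3} - 3^{1/3} - 2)/5`. -/
theorem stmt_15 :
    (2 * (3 : ℝ) ^ ((2 : ℝ) / 3) - (3 : ℝ) ^ ((1 : ℝ) / 3) - 2) / 5 ∈ Set.Ioo (0 : ℝ) 1 ∧
    (fun t : ℝ => (1 - t) ^ 3 * (t + (1 - t) / 8) / (1 - t ^ 4))
        ((2 * (3 : ℝ) ^ ((2 : ℝ) / 3) - (3 : ℝ) ^ ((1 : ℝ) / 3) - 2) / 5) =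
      1 + ((3 : ℝ) ^ ((5 : ℝ) / 3) - (3 : ℝ) ^ ((7 : ℝ) / 3)) / 8 ∧
    ∀ t ∈ Set.Ioo (0 : ℝ) 1,
      (1 - t) ^ 3 * (t + (1 - t) / 8) / (1 - t ^ 4) ≤
        1 + ((3 : ℝ) ^ ((5 : ℝ) / 3) - (3 : ℝ) ^ ((7 : ℝ) / 3)) / 8 := by
  set c : ℝ := (3 : ℝ) ^ ((1 : ℝ) / 3) with hc
  have hcpos : (0 : ℝ) < c := Real.rpow_pos_of_pos (by norm_num) _
  have hc3 : c ^ 3 = 3 := by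
    rw [hc, ← Real.rpow_natCast ((3:ℝ) ^ ((1:ℝ)/3)) 3,
      ← Real.rpow_mul (by norm_num : (0:ℝ) ≤ 3)]
    norm_num
  have hlb : (1.4 : ℝ) < c := by nlinarith [hcpos, hc3, sq_nonneg (c - 1.4), sq_nonneg c]
  have hub : c < 1.5 := by nlinarith [hcpos, hc3, sq_nonneg (c - 1.5), sq_nonneg c]
  have h23 : (3 : ℝ) ^ ((2 : ℝ) / 3) = c ^ 2 := by
    rw [hc, ← Real.rpow_natCast ((3:ℝ) ^ ((1:ℝ)/3)) 2,
      ← Real.rpow_mul (by norm_num : (0:ℝ) ≤ 3)]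
    norm_num
  have h53 : (3 : ℝ) ^ ((5 : ℝ) / 3) = 3 * c ^ 2 := by
    have h5 : (3 : ℝ) * c ^ 2 = c ^ 5 := by linear_combination (-c ^ 2) * hc3
    rw [h5, hc, ← Real.rpow_natCast ((3:ℝ) ^ ((1:ℝ)/3)) 5,
      ← Real.rpow_mul (by norm_num : (0:ℝ) ≤ 3)]
    norm_num
  have h73 : (3 : ℝ) ^ ((7 : ℝ) / 3) = 9 * c := by
    have h7 : (9 : ℝ) * c = c ^ 7 := by linear_combination (-(c ^ 4) - 3 * c) * hc3
    rw [h7, hc, ← Real.rpow_natCast ((3:ℝ) ^ ((1:ℝ)/3)) 7,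
      ← Real.rpow_mul (by norm_num : (0:ℝ) ≤ 3)]
    norm_num
  rw [h23, h53, h73]
  set t₀ : ℝ := (2 * c ^ 2 - c - 2) / 5 with ht₀
  have ht0pos : 0 < t₀ := by
    rw [ht₀]; nlinarith [hlb, hub]
  have ht0lt : t₀ < 1 := by
    rw [ht₀]; nlinarith [hlb, hub]
  refine ⟨⟨ht0pos, ht0lt⟩, ?_, ?_⟩
  · have h4 : (0 : ℝ) < 1 - t₀ ^ 4 := by
      have := pow_lt_one₀ ht0pos.le ht0lt (by norm_num : 4 ≠ 0)
      linarith
    show (1 - t₀) ^ 3 * (t₀ + (1 - t₀) / 8) / (1 - t₀ ^ 4) = 1 + (3 * c ^ 2 - 9 * c) / 8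
    rw [div_eq_iff (ne_of_gt h4), ht₀]
    linear_combination ((6:ℝ)/625 * c ^ 7 - 6/125 * c ^ 6 + 23/625 * c ^ 5 + 92/625 * c ^ 4
      - 121/1000 * c ^ 3 - 253/1000 * c ^ 2 - 671/5000 * c + 2653/5000) * hc3
  · intro t ht
    obtain ⟨ht0, ht1⟩ := ht
    have h4 : (0 : ℝ) < 1 - t ^ 4 := by
      have := pow_lt_one₀ ht0.le ht1 (by norm_num : 4 ≠ 0)
      linarith
    rw [div_le_iff₀ h4]
    have key : (1 + (3 * c ^ 2 - 9 * c) / 8) * (1 - t ^ 4)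
        - (1 - t) ^ 3 * (t + (1 - t) / 8)
        = (1/8) * (1 - t) * (t - t₀) ^ 2 * ((3 * c ^ 2 - 9 * c + 1) * t
            + (5 * c ^ 2 + 5 * c - 5)) := by
      rw [ht₀]
      linear_combination ((1:ℝ)/25 * c ^ 3 * t - 1/10 * c ^ 3 + 3/50 * c ^ 3 * t ^ 2
        + 6/25 * c ^ 2 * t - 6/25 * c ^ 2 * t ^ 2 - 21/200 * c * t ^ 2 + 3/100 * c * t
        + 3/8 * c - 3/10 * c * t ^ 3 - 153/200 * t ^ 2 + 1/25 * t - 13/40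
        + 21/20 * t ^ 3) * hc3
    have hlin : 0 ≤ (3 * c ^ 2 - 9 * c + 1) * t + (5 * c ^ 2 + 5 * c - 5) := by
      nlinarith [hlb, hub, ht0, ht1, mul_nonneg (sub_nonneg.2 ht1.le)
        (show (0:ℝ) ≤ 9 * c - 3 * c ^ 2 - 1 by nlinarith [hlb, hub])]
    linarith [key, mul_nonneg (mul_nonneg (mul_nonneg (by norm_num : (0:ℝ) ≤ 1/8)
      (sub_nonneg.2 ht1.le)) (sq_nonneg (t - t₀))) hlin]
end

section
/- For every n ≥ 2, the carousel tournament R_{2n+1} contains no subtournament isomorphic to W_4 and none isomorphic to L_4. -/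
/-- The carousel tournament `R_{2n+1}`: vertex `x` beats vertex `y` iff
`(y - x) mod (2n+1) ∈ {1, …, n}`. -/
def carouselBeats (n : ℕ) (x y : ZMod (2 * n + 1)) : Prop :=
  (y - x).val ∈ Finset.Icc 1 n

lemma carousel_key (n : ℕ) (u v : ZMod (2 * n + 1)) (hu : u.val ≤ n) (hv : v.val ≤ n)
    (h : (v - u).val ∈ Finset.Icc 1 n) : u.val < v.val := by
  simp only [Finset.mem_Icc] at h
  by_contra hlt
  push_neg at hlt
  rcases eq_or_ne u v with rfl | hne
  · simp at h
  · have h1 : (u - v).val = u.val - v.val := ZMod.val_sub hlt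
    have h3 : u - v ≠ 0 := sub_ne_zero.mpr hne
    have h2 : v - u = -(u - v) := by ring
    haveI : NeZero (u - v) := ⟨h3⟩
    have h4 : (-(u - v)).val = 2 * n + 1 - (u - v).val := ZMod.val_neg_of_ne_zero _
    rw [h2, h4] at h
    have h5 : (u - v).val < 2 * n + 1 := ZMod.val_lt _
    have h6 : v.val < u.val := by
      rcases lt_or_eq_of_le hlt with h' | h'
      · exact h'
      · exact absurd (ZMod.val_injective _ h').symm hne
    omega

/-- For `n ≥ 2`, the carousel tournament `R_{2n+1}` contains no subtournament
isomorphic to `W₄` and none isomorphic to `L₄`. -/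
theorem stmt_19 (n : ℕ) (hn : 2 ≤ n) :
    (¬ ∃ a b c d : ZMod (2 * n + 1),
        a ≠ b ∧ a ≠ c ∧ a ≠ d ∧ b ≠ c ∧ b ≠ d ∧ c ≠ d ∧
        carouselBeats n d a ∧ carouselBeats n d b ∧ carouselBeats n d c ∧
        carouselBeats n a b ∧ carouselBeats n b c ∧ carouselBeats n c a) ∧
    (¬ ∃ a b c d : ZMod (2 * n + 1),
        a ≠ b ∧ a ≠ c ∧ a ≠ d ∧ b ≠ c ∧ b ≠ d ∧ c ≠ d ∧
        carouselBeats n a d ∧ carouselBeats n b d ∧ carouselBeats n c d ∧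
        carouselBeats n a b ∧ carouselBeats n b c ∧ carouselBeats n c a) := by
  constructor
  · rintro ⟨a, b, c, d, -, -, -, -, -, -, hda, hdb, hdc, hab, hbc, hca⟩
    have hA : (a - d).val ≤ n := (Finset.mem_Icc.mp hda).2
    have hB : (b - d).val ≤ n := (Finset.mem_Icc.mp hdb).2
    have hC : (c - d).val ≤ n := (Finset.mem_Icc.mp hdc).2
    have e1 : (a - d).val < (b - d).val := by
      apply carousel_key n _ _ hA hB
      have : (b - d) - (a - d) = b - a := by ring
      rwa [this]
    have e2 : (b - d).val < (c - d).val := by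
      apply carousel_key n _ _ hB hC
      have : (c - d) - (b - d) = c - b := by ring
      rwa [this]
    have e3 : (c - d).val < (a - d).val := by
      apply carousel_key n _ _ hC hA
      have : (a - d) - (c - d) = a - c := by ring
      rwa [this]
    omega
  · rintro ⟨a, b, c, d, -, -, -, -, -, -, had, hbd, hcd, hab, hbc, hca⟩
    have hA : (d - a).val ≤ n := (Finset.mem_Icc.mp had).2
    have hB : (d - b).val ≤ n := (Finset.mem_Icc.mp hbd).2
    have hC : (d - c).val ≤ n := (Finset.mem_Icc.mp hcd).2
    have e1 : (d - b).val < (d - a).val := by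
      apply carousel_key n _ _ hB hA
      have : (d - a) - (d - b) = b - a := by ring
      rwa [this]
    have e2 : (d - c).val < (d - b).val := by
      apply carousel_key n _ _ hC hB
      have : (d - b) - (d - c) = c - b := by ring
      rwa [this]
    have e3 : (d - a).val < (d - c).val := by
      apply carousel_key n _ _ hA hC
      have : (d - c) - (d - a) = a - c := by ring
      rwa [this]
    omega
end
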